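/- (Critical diffusion-time bound.) Let n ≥ 1, let A be an invertible real n×n matrix, let m_c ∈ ℝⁿ, and let Σ_c, Σ_t be positive definite symmetric real n×n matrices. Then there exist μ_q ∈ ℝⁿ and a positive definite symmetric real n×n matrix Σ_q such that ∫_{ℝⁿ} g_n(s; μ_q, Σ_q) · g_n(s; A x, Σ_t) ds = |det A|⁻¹ · g_n(x; m_c, Σ_c) for all x ∈ ℝⁿ, if and only if the matrix A Σ_c Aᵀ − Σ_t is positive definite; in that case necessarily μ_q = A m_c and Σ_q = A Σ_c Aᵀ − Σ_t. -/

import Mathlib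

open MeasureTheory Matrix

/-- The Gaussian density on `ℝⁿ` with mean `m` and covariance matrix `S`:
`g_n(x; m, S) = ((2π)^n det S)^(−1/2) · exp(−(1/2)⟨x − m, S⁻¹(x − m)⟩)`. -/
noncomputable def gaussDensity (n : ℕ) (m : Fin n → ℝ) (S : Matrix (Fin n) (Fin n) ℝ)
    (x : Fin n → ℝ) : ℝ :=
  ((2 * Real.pi) ^ n * S.det) ^ (-(1 : ℝ) / 2) *
    Real.exp (-(1 / 2) * ((x - m) ⬝ᵥ S⁻¹.mulVec (x - m)))

/-!
Completing the square in `s` gives the Gaussian convolution identity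
`∫ g(s; μ, S₁) g(s; y, S₂) ds = g(y; μ, S₁ + S₂)`, and the linear substitution `x ↦ A x` gives
`|det A|⁻¹ g(x; m_c, Σ_c) = g(A x; A m_c, A Σ_c Aᵀ)`. Since `x ↦ A x` is onto, the reproduction
identity therefore says `g(·; μ_q, Σ_q + Σ_t) = g(·; A m_c, A Σ_c Aᵀ)`. A Gaussian density
determines its mean (its unique maximiser) and then its covariance (the quadratic form in its
exponent), so the identity holds iff `μ_q = A m_c` and `Σ_q = A Σ_c Aᵀ − Σ_t`, and this `Σ_q` is
admissible exactly when it is positive definite.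
-/

namespace Matrix

variable {ι R K : Type*} [Fintype ι]

section CommRing

variable [CommRing R]

lemma IsSymm.dotProduct_mulVec_comm {M : Matrix ι ι R} (hM : M.IsSymm) (v w : ι → R) :
    v ⬝ᵥ M *ᵥ w = w ⬝ᵥ M *ᵥ v := by
  simpa only [hM.eq] using dotProduct_transpose_mulVec M v w

lemma IsSymm.sub_dotProduct_mulVec_sub {M : Matrix ι ι R} (hM : M.IsSymm) (v w : ι → R) :
    (v - w) ⬝ᵥ M *ᵥ (v - w) = v ⬝ᵥ M *ᵥ v - 2 * (v ⬝ᵥ M *ᵥ w) + w ⬝ᵥ M *ᵥ w := by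
  rw [mulVec_sub, sub_dotProduct, dotProduct_sub, dotProduct_sub, hM.dotProduct_mulVec_comm w v]
  ring

lemma IsSymm.complete_square [DecidableEq ι] {P Q : Matrix ι ι R} (hP : P.IsSymm)
    (hQ : Q.IsSymm) (hPQ : IsUnit (P + Q)) (t d : ι → R) :
    (t - d) ⬝ᵥ P *ᵥ (t - d) + t ⬝ᵥ Q *ᵥ t
      = (t - (P + Q)⁻¹ *ᵥ P *ᵥ d) ⬝ᵥ (P + Q) *ᵥ (t - (P + Q)⁻¹ *ᵥ P *ᵥ d)
        + d ⬝ᵥ (P - P * (P + Q)⁻¹ * P) *ᵥ d := by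
  have hR : (P + Q).IsSymm := hP.add hQ
  have hRm : (P + Q) *ᵥ ((P + Q)⁻¹ *ᵥ P *ᵥ d) = P *ᵥ d := by
    rw [mulVec_mulVec, mul_nonsing_inv _ ((isUnit_iff_isUnit_det _).mp hPQ), one_mulVec]
  have hmRm : ((P + Q)⁻¹ *ᵥ P *ᵥ d) ⬝ᵥ P *ᵥ d = d ⬝ᵥ (P * (P + Q)⁻¹ * P) *ᵥ d := by
    rw [← mulVec_mulVec, ← mulVec_mulVec, ← dotProduct_transpose_mulVec P, hP.eq]
  rw [hR.sub_dotProduct_mulVec_sub, hP.sub_dotProduct_mulVec_sub, hRm, hmRm, sub_mulVec,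
    dotProduct_sub, add_mulVec, dotProduct_add]
  ring

variable [DecidableEq ι] {A B : Matrix ι ι R}

lemma add_eq_mul_inv_add_inv_mul (hA : IsUnit A) (hB : IsUnit B) :
    A + B = A * (A⁻¹ + B⁻¹) * B := by
  rw [Matrix.mul_add, Matrix.add_mul, mul_nonsing_inv _ ((isUnit_iff_isUnit_det _).mp hA),
    Matrix.one_mul, Matrix.mul_assoc, nonsing_inv_mul _ ((isUnit_iff_isUnit_det _).mp hB),
    Matrix.mul_one, add_comm]

lemma det_mul_det_eq_det_add_mul_det_inv_add_inv (hA : IsUnit A) (hB : IsUnit B)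
    (hC : IsUnit (A⁻¹ + B⁻¹)) :
    A.det * B.det = (A + B).det * (A⁻¹ + B⁻¹)⁻¹.det := by
  calc A.det * B.det = A.det * B.det * ((A⁻¹ + B⁻¹) * (A⁻¹ + B⁻¹)⁻¹).det := by
        rw [mul_nonsing_inv _ ((isUnit_iff_isUnit_det _).mp hC), det_one, mul_one]
    _ = (A + B).det * (A⁻¹ + B⁻¹)⁻¹.det := by
        rw [add_eq_mul_inv_add_inv_mul hA hB]; simp only [det_mul]; ring

end CommRing

lemma IsSymm.ext_of_dotProduct_mulVec [Field K] [NeZero (2 : K)] {M N : Matrix ι ι K}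
    (hM : M.IsSymm) (hN : N.IsSymm) (h : ∀ v, v ⬝ᵥ M *ᵥ v = v ⬝ᵥ N *ᵥ v) : M = N := by
  classical
  have hK (v : ι → K) : v ⬝ᵥ (M - N) *ᵥ v = 0 := by rw [sub_mulVec, dotProduct_sub, h, sub_self]
  ext i j
  have hij := hK (Pi.single i 1 + Pi.single j 1)
  have hii := hK (Pi.single i 1)
  have hjj := hK (Pi.single j 1)
  simp only [mulVec_add, add_dotProduct, dotProduct_add, mulVec_single_one,
    single_one_dotProduct, col_apply, sub_apply] at hij hii hjj
  have h2 : (2 : K) * (M i j - N i j) = 0 := by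
    linear_combination hij - hii - hjj - hM.apply i j + hN.apply i j
  exact sub_eq_zero.mp ((mul_eq_zero.mp h2).resolve_left two_ne_zero)

end Matrix

lemma integral_comp_mulVec {ι E : Type*} [Fintype ι] [DecidableEq ι] [NormedAddCommGroup E]
    [NormedSpace ℝ E] {B : Matrix ι ι ℝ} (hB : B.det ≠ 0) (f : (ι → ℝ) → E) :
    ∫ y, f (B *ᵥ y) = |B.det|⁻¹ • ∫ x, f x := by
  have hemb : MeasurableEmbedding (toLin' B) :=
    (LinearMap.isClosedEmbedding_of_injective (LinearMap.ker_eq_bot.mpr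
      (mulVec_injective_of_isUnit ((isUnit_iff_isUnit_det B).mpr hB.isUnit)))).measurableEmbedding
  calc ∫ y, f (B *ᵥ y) = ∫ x, f x ∂(Measure.map (toLin' B) volume) := (hemb.integral_map f).symm
    _ = |B.det|⁻¹ • ∫ x, f x := by
      rw [Real.map_matrix_volume_pi_eq_smul_volume_pi hB, integral_smul_measure,
        ENNReal.toReal_ofReal (abs_nonneg _), abs_inv]

lemma integral_exp_neg_half_dotProduct_self (ι : Type*) [Fintype ι] :
    ∫ y : ι → ℝ, Real.exp (-(1 / 2) * (y ⬝ᵥ y)) = √((2 * Real.pi) ^ Fintype.card ι) := by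
  have hprod (y : ι → ℝ) :
      Real.exp (-(1 / 2) * (y ⬝ᵥ y)) = ∏ i, Real.exp (-(1 / 2) * y i ^ 2) := by
    rw [← Real.exp_sum, dotProduct, Finset.mul_sum]
    simp only [sq]
  simp_rw [hprod]
  rw [integral_fintype_prod_volume_eq_pow (fun x : ℝ => Real.exp (-(1 / 2) * x ^ 2)),
    integral_gaussian, div_div_eq_mul_div, div_one, eq_comm,
    Real.sqrt_eq_iff_mul_self_eq_of_pos (by positivity), ← mul_pow,
    Real.mul_self_sqrt (by positivity), mul_comm]

open scoped MatrixOrder in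
lemma integral_exp_neg_half_dotProduct_inv_mulVec {ι : Type*} [Fintype ι] [DecidableEq ι]
    {S : Matrix ι ι ℝ} (hS : S.PosDef) :
    ∫ x : ι → ℝ, Real.exp (-(1 / 2) * (x ⬝ᵥ S⁻¹ *ᵥ x))
      = √((2 * Real.pi) ^ Fintype.card ι * S.det) := by
  set B := CFC.sqrt S
  have hBB : B * B = S := CFC.sqrt_mul_sqrt_self S hS.posSemidef.nonneg
  have hBsymm : B.IsSymm := by simpa using (CFC.sqrt_nonneg S).posSemidef.isHermitian
  have hdetB : B.det = √S.det := by simpa using hS.posSemidef.det_sqrt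
  have hdetS : √S.det ≠ 0 := (Real.sqrt_pos.mpr hS.det_pos).ne'
  have hB : IsUnit B.det := (hdetB ▸ hdetS).isUnit
  have hquad (y : ι → ℝ) : (B *ᵥ y) ⬝ᵥ S⁻¹ *ᵥ (B *ᵥ y) = y ⬝ᵥ y := by
    rw [dotProduct_comm, ← dotProduct_transpose_mulVec, hBsymm.eq, mulVec_mulVec, mulVec_mulVec,
      ← hBB, Matrix.mul_inv_rev, ← Matrix.mul_assoc B, mul_nonsing_inv B hB, Matrix.one_mul,
      nonsing_inv_mul B hB, one_mulVec]
  have h := integral_comp_mulVec hB.ne_zero fun x => Real.exp (-(1 / 2) * (x ⬝ᵥ S⁻¹ *ᵥ x))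
  simp only [hquad, integral_exp_neg_half_dotProduct_self, smul_eq_mul, hdetB,
    abs_of_nonneg (Real.sqrt_nonneg _)] at h
  rw [Real.sqrt_mul (by positivity), h]
  field_simp

section gaussDensity

variable {n : ℕ} {S S₁ S₂ : Matrix (Fin n) (Fin n) ℝ}

lemma integral_gaussDensity (m : Fin n → ℝ) (hS : S.PosDef) :
    ∫ x, gaussDensity n m S x = 1 := by
  have hc : 0 < (2 * Real.pi) ^ n * S.det := by have := hS.det_pos; positivity
  unfold gaussDensity
  rw [integral_const_mul,
    integral_sub_right_eq_self (fun x => Real.exp (-(1 / 2) * (x ⬝ᵥ S⁻¹ *ᵥ x))) m,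
    integral_exp_neg_half_dotProduct_inv_mulVec hS, Fintype.card_fin, Real.sqrt_eq_rpow,
    ← Real.rpow_add hc]
  norm_num

lemma gaussDensity_comm (m x : Fin n → ℝ) (S : Matrix (Fin n) (Fin n) ℝ) :
    gaussDensity n m S x = gaussDensity n x S m := by
  rw [gaussDensity, gaussDensity, ← neg_sub x m, mulVec_neg, neg_dotProduct, dotProduct_neg,
    neg_neg]

lemma gaussDensity_mul_gaussDensity (hS₁ : S₁.PosDef) (hS₂ : S₂.PosDef) (μ₁ μ₂ s : Fin n → ℝ) :
    gaussDensity n μ₁ S₁ s * gaussDensity n μ₂ S₂ s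
      = gaussDensity n μ₂ (S₁ + S₂) μ₁ * gaussDensity n
          (μ₂ + (S₁⁻¹ + S₂⁻¹)⁻¹ *ᵥ S₁⁻¹ *ᵥ (μ₁ - μ₂)) (S₁⁻¹ + S₂⁻¹)⁻¹ s := by
  have hR : (S₁⁻¹ + S₂⁻¹).PosDef := hS₁.inv.add hS₂.inv
  have hc : ((2 * Real.pi) ^ n * S₁.det) ^ (-(1 : ℝ) / 2) *
        ((2 * Real.pi) ^ n * S₂.det) ^ (-(1 : ℝ) / 2)
      = ((2 * Real.pi) ^ n * (S₁ + S₂).det) ^ (-(1 : ℝ) / 2) *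
        ((2 * Real.pi) ^ n * (S₁⁻¹ + S₂⁻¹)⁻¹.det) ^ (-(1 : ℝ) / 2) := by
    have := hS₁.det_pos; have := hS₂.det_pos
    have := (hS₁.add hS₂).det_pos; have := hR.inv.det_pos
    rw [← Real.mul_rpow (by positivity) (by positivity),
      ← Real.mul_rpow (by positivity) (by positivity)]
    congr 1
    linear_combination ((2 * Real.pi) ^ n) ^ 2 *
      det_mul_det_eq_det_add_mul_det_inv_add_inv hS₁.isUnit hS₂.isUnit hR.isUnit
  have hq := (isHermitian_iff_isSymm.mp hS₁.inv.isHermitian).complete_square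
    (isHermitian_iff_isSymm.mp hS₂.inv.isHermitian) hR.isUnit (s - μ₂) (μ₁ - μ₂)
  have hW : (S₁ + S₂)⁻¹ = S₁⁻¹ - S₁⁻¹ * (S₁⁻¹ + S₂⁻¹)⁻¹ * S₁⁻¹ := by
    simpa [add_comm] using add_mul_mul_inv_eq_sub S₁ 1 S₂ 1 hS₁.isUnit hS₂.isUnit
      (by simpa [add_comm] using hR.isUnit)
  rw [sub_sub_sub_cancel_right, sub_sub, ← hW] at hq
  unfold gaussDensity
  rw [nonsing_inv_nonsing_inv _ hR.det_pos.ne'.isUnit, mul_mul_mul_comm, ← Real.exp_add,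
    mul_mul_mul_comm _ (Real.exp _), ← Real.exp_add, hc]
  congr 2
  linear_combination (-(1 / 2)) * hq

lemma integral_gaussDensity_mul_gaussDensity (hS₁ : S₁.PosDef) (hS₂ : S₂.PosDef)
    (μ₁ μ₂ : Fin n → ℝ) :
    ∫ s, gaussDensity n μ₁ S₁ s * gaussDensity n μ₂ S₂ s = gaussDensity n μ₂ (S₁ + S₂) μ₁ := by
  simp_rw [gaussDensity_mul_gaussDensity hS₁ hS₂]
  rw [integral_const_mul, integral_gaussDensity _ (hS₁.inv.add hS₂.inv).inv, mul_one]

lemma gaussDensity_mulVec {A : Matrix (Fin n) (Fin n) ℝ} (hA : IsUnit A.det) (hS : 0 ≤ S.det)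
    (m x : Fin n → ℝ) :
    gaussDensity n (A *ᵥ m) (A * S * Aᵀ) (A *ᵥ x) = |A.det|⁻¹ * gaussDensity n m S x := by
  have hq : (A *ᵥ x - A *ᵥ m) ⬝ᵥ (A * S * Aᵀ)⁻¹ *ᵥ (A *ᵥ x - A *ᵥ m)
      = (x - m) ⬝ᵥ S⁻¹ *ᵥ (x - m) := by
    rw [← mulVec_sub, dotProduct_comm, ← dotProduct_transpose_mulVec, mulVec_mulVec,
      mulVec_mulVec, Matrix.mul_inv_rev, Matrix.mul_inv_rev, ← Matrix.mul_assoc,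
      ← Matrix.mul_assoc, mul_nonsing_inv _ (by rwa [det_transpose]), Matrix.one_mul,
      Matrix.mul_assoc, nonsing_inv_mul _ hA, Matrix.mul_one, dotProduct_comm]
  have hc : ((2 * Real.pi) ^ n * (A * S * Aᵀ).det) ^ (-(1 : ℝ) / 2)
      = |A.det|⁻¹ * ((2 * Real.pi) ^ n * S.det) ^ (-(1 : ℝ) / 2) := by
    rw [det_mul, det_mul, det_transpose, mul_right_comm _ S.det, ← sq, mul_left_comm,
      Real.mul_rpow (sq_nonneg _) (by positivity), ← Real.sqrt_sq_eq_abs, Real.sqrt_eq_rpow,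
      ← Real.rpow_neg_one, ← Real.rpow_mul (sq_nonneg _)]
    norm_num
  rw [gaussDensity, gaussDensity, hq, hc, mul_assoc]

lemma gaussDensity_add_self (m v : Fin n → ℝ) (S : Matrix (Fin n) (Fin n) ℝ) :
    gaussDensity n m S (m + v)
      = gaussDensity n m S m * Real.exp (-(1 / 2) * (v ⬝ᵥ S⁻¹ *ᵥ v)) := by
  simp [gaussDensity]

lemma gaussDensity_pos (hS : 0 < S.det) (m x : Fin n → ℝ) : 0 < gaussDensity n m S x := by
  unfold gaussDensity
  have := Real.rpow_pos_of_pos (by positivity : 0 < (2 * Real.pi) ^ n * S.det) (-(1 : ℝ) / 2)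
  positivity

lemma gaussDensity_lt_gaussDensity_self (hS : S.PosDef) {m x : Fin n → ℝ} (hx : x ≠ m) :
    gaussDensity n m S x < gaussDensity n m S m := by
  have hq : 0 < (x - m) ⬝ᵥ S⁻¹ *ᵥ (x - m) := by
    simpa using hS.inv.dotProduct_mulVec_pos (sub_ne_zero.mpr hx)
  rw [← add_sub_cancel m x, gaussDensity_add_self]
  exact mul_lt_of_lt_one_right (gaussDensity_pos hS.det_pos m m)
    (Real.exp_lt_one_iff.mpr (by linarith))

lemma gaussDensity_injective (hS₁ : S₁.PosDef) (hS₂ : S₂.PosDef) {μ₁ μ₂ : Fin n → ℝ}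
    (h : ∀ x, gaussDensity n μ₁ S₁ x = gaussDensity n μ₂ S₂ x) : μ₁ = μ₂ ∧ S₁ = S₂ := by
  have hμ : μ₁ = μ₂ := by
    by_contra hne
    have h₁ := gaussDensity_lt_gaussDensity_self hS₁ (Ne.symm hne)
    have h₂ := gaussDensity_lt_gaussDensity_self hS₂ hne
    linarith [h μ₁, h μ₂]
  subst hμ
  refine ⟨rfl, inv_inj ?_ hS₁.det_pos.ne'.isUnit⟩
  refine (isHermitian_iff_isSymm.mp hS₁.inv.isHermitian).ext_of_dotProduct_mulVec
    (isHermitian_iff_isSymm.mp hS₂.inv.isHermitian) fun v => ?_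
  have hv := h (μ₁ + v)
  rw [gaussDensity_add_self, gaussDensity_add_self, h μ₁] at hv
  have := Real.exp_injective (mul_left_cancel₀ (gaussDensity_pos hS₂.det_pos μ₁ μ₁).ne' hv)
  linarith

end gaussDensity

theorem critical_diffusion_time_bound_general (n : ℕ)
    (A : Matrix (Fin n) (Fin n) ℝ) (hA : IsUnit A.det)
    (mc : Fin n → ℝ) (Sc St : Matrix (Fin n) (Fin n) ℝ)
    (hSc : Sc.PosDef) (hSt : St.PosDef) :
    ((∃ (μq : Fin n → ℝ) (Sq : Matrix (Fin n) (Fin n) ℝ), Sq.PosDef ∧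
        ∀ x : Fin n → ℝ,
          ∫ s : Fin n → ℝ, gaussDensity n μq Sq s * gaussDensity n (A.mulVec x) St s
            = |A.det|⁻¹ * gaussDensity n mc Sc x)
      ↔ (A * Sc * Aᵀ - St).PosDef)
    ∧ ∀ (μq : Fin n → ℝ) (Sq : Matrix (Fin n) (Fin n) ℝ), Sq.PosDef →
        (∀ x : Fin n → ℝ,
          ∫ s : Fin n → ℝ, gaussDensity n μq Sq s * gaussDensity n (A.mulVec x) St s
            = |A.det|⁻¹ * gaussDensity n mc Sc x) →
        μq = A.mulVec mc ∧ Sq = A * Sc * Aᵀ - St := by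
  have hASA : (A * Sc * Aᵀ).PosDef := by
    simpa using hSc.mul_mul_conjTranspose_same
      (vecMul_injective_of_isUnit ((isUnit_iff_isUnit_det A).mpr hA))
  have hreproduce (μq : Fin n → ℝ) (Sq : Matrix (Fin n) (Fin n) ℝ) (hSq : Sq.PosDef) :
      (∀ x, ∫ s, gaussDensity n μq Sq s * gaussDensity n (A *ᵥ x) St s
          = |A.det|⁻¹ * gaussDensity n mc Sc x)
        ↔ ∀ y, gaussDensity n μq (Sq + St) y = gaussDensity n (A *ᵥ mc) (A * Sc * Aᵀ) y := by
    refine (forall_congr' fun x => ?_).trans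
      (mulVec_surjective_iff_isUnit.mpr ((isUnit_iff_isUnit_det A).mpr hA)).forall.symm
    rw [integral_gaussDensity_mul_gaussDensity hSq hSt, gaussDensity_comm,
      gaussDensity_mulVec hA hSc.det_pos.le]
  have huniq (μq : Fin n → ℝ) (Sq : Matrix (Fin n) (Fin n) ℝ) (hSq : Sq.PosDef)
      (h : ∀ x, ∫ s, gaussDensity n μq Sq s * gaussDensity n (A *ᵥ x) St s
          = |A.det|⁻¹ * gaussDensity n mc Sc x) :
      μq = A *ᵥ mc ∧ Sq = A * Sc * Aᵀ - St := by
    obtain ⟨hμ, hS⟩ := gaussDensity_injective (hSq.add hSt) hASA ((hreproduce μq Sq hSq).mp h)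
    exact ⟨hμ, eq_sub_of_add_eq hS⟩
  refine ⟨⟨fun ⟨μq, Sq, hSq, h⟩ => (huniq μq Sq hSq h).2 ▸ hSq, fun hpos => ?_⟩, huniq⟩
  exact ⟨A *ᵥ mc, _, hpos, (hreproduce _ _ hpos).mpr fun y => by rw [sub_add_cancel]⟩

/-- Critical diffusion-time bound: a Gaussian context `(μ_q, Σ_q)` reproducing
`|det A|⁻¹ g_n(·; m_c, Σ_c)` after convolution with the forward kernel `g_n(s; A x, Σ_t)`
exists iff `A Σ_c Aᵀ − Σ_t` is positive definite, in which case necessarily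
`μ_q = A m_c` and `Σ_q = A Σ_c Aᵀ − Σ_t`. -/
theorem critical_diffusion_time_bound (n : ℕ) (hn : 1 ≤ n)
    (A : Matrix (Fin n) (Fin n) ℝ) (hA : IsUnit A.det)
    (mc : Fin n → ℝ) (Sc St : Matrix (Fin n) (Fin n) ℝ)
    (hSc : Sc.PosDef) (hSt : St.PosDef) :
    ((∃ (μq : Fin n → ℝ) (Sq : Matrix (Fin n) (Fin n) ℝ), Sq.PosDef ∧
        ∀ x : Fin n → ℝ,
          ∫ s : Fin n → ℝ, gaussDensity n μq Sq s * gaussDensity n (A.mulVec x) St s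
            = |A.det|⁻¹ * gaussDensity n mc Sc x)
      ↔ (A * Sc * Aᵀ - St).PosDef)
    ∧ ∀ (μq : Fin n → ℝ) (Sq : Matrix (Fin n) (Fin n) ℝ), Sq.PosDef →
        (∀ x : Fin n → ℝ,
          ∫ s : Fin n → ℝ, gaussDensity n μq Sq s * gaussDensity n (A.mulVec x) St s
            = |A.det|⁻¹ * gaussDensity n mc Sc x) →
        μq = A.mulVec mc ∧ Sq = A * Sc * Aᵀ - St :=
  critical_diffusion_time_bound_general n A hA mc Sc St hSc hSt
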